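/- arXiv:2505.06024 — 5 statements merged into one kernel-verified Lean document; each statement's English description precedes it below -/
import Mathlib

section
/- Let V be a finite-dimensional real vector space, F ⊆ V a subspace, and ω a skew-symmetric bilinear form on F. Then D_{F,ω} = {(u,α) ∈ V ⊕ V* | u ∈ F and α(v) = ω(u,v) for all v ∈ F} is a linear Dirac structure on V. Moreover, its projection onto V equals F, and the induced form ω_D on F defined by ω_D(u,v) = α(v) for (u,α) ∈ D agrees with ω. -/
/-!
`D_{F,ω}` is isotropic because `ω` is skew. Conversely, if `(u, α)` is orthogonal to `D_{F,ω}`,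
pairing it with `(0, f)` for every `f` annihilating `F` forces `u ∈ F`, and pairing it with
`(v, β)`, where `β` extends `ω(v, ·)` to `V`, forces `α(v) = -ω(v, u) = ω(u, v)`.
-/

/-- The orthogonal of a subspace of `V ⊕ V*` with respect to the symmetric pairing
`⟪(v₁,α₁),(v₂,α₂)⟫ = α₁(v₂) + α₂(v₁)`. -/
def diracOrtho {V : Type*} [AddCommGroup V] [Module ℝ V]
    (U : Submodule ℝ (V × Module.Dual ℝ V)) :
    Submodule ℝ (V × Module.Dual ℝ V) where
  carrier := {p | ∀ q ∈ U, p.2 q.1 + q.2 p.1 = 0}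
  add_mem' := by
    intro a b ha hb q hq
    have h1 := ha q hq
    have h2 := hb q hq
    simp only [Prod.fst_add, Prod.snd_add, LinearMap.add_apply, map_add] at *
    linarith
  zero_mem' := by intro q hq; simp
  smul_mem' := by
    intro c a ha q hq
    have h1 := ha q hq
    simp only [Prod.smul_fst, Prod.smul_snd, LinearMap.smul_apply, map_smul,
      smul_eq_mul] at *
    linear_combination c * h1


/-- The subspace `D_{F,ω} = {(u,α) | u ∈ F, α(v) = ω(u,v) ∀ v ∈ F}` determined by a
subspace `F ⊆ V` and a bilinear form `ω` on `F` (given as `L : F →ₗ F*`). -/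
def DFomega {V : Type*} [AddCommGroup V] [Module ℝ V] (F : Submodule ℝ V)
    (L : F →ₗ[ℝ] Module.Dual ℝ F) : Submodule ℝ (V × Module.Dual ℝ V) where
  carrier := {p | ∃ hu : p.1 ∈ F, ∀ v : F, p.2 v = L ⟨p.1, hu⟩ v}
  zero_mem' := ⟨F.zero_mem, by intro v; simp [show ((⟨(0:V), F.zero_mem⟩ : F)) = 0 from rfl]⟩
  add_mem' := by
    rintro a b ⟨ha, hA⟩ ⟨hb, hB⟩
    refine ⟨F.add_mem ha hb, fun v => ?_⟩
    have key : (⟨(a + b).1, F.add_mem ha hb⟩ : F) = ⟨a.1, ha⟩ + ⟨b.1, hb⟩ := rfl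
    simp only [Prod.snd_add, LinearMap.add_apply, hA v, hB v, key, map_add]
  smul_mem' := by
    rintro c a ⟨ha, hA⟩
    refine ⟨F.smul_mem c ha, fun v => ?_⟩
    have key : (⟨(c • a).1, F.smul_mem c ha⟩ : F) = c • (⟨a.1, ha⟩ : F) := rfl
    simp only [Prod.smul_snd, LinearMap.smul_apply, hA v, key, map_smul, smul_eq_mul]

section

variable {V : Type*} [AddCommGroup V] [Module ℝ V] {F : Submodule ℝ V}
  {L : F →ₗ[ℝ] Module.Dual ℝ F}

theorem snd_apply_of_mem_DFomega {p : V × Module.Dual ℝ V} (hp : p ∈ DFomega F L)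
    (hu : p.1 ∈ F) (v : F) : p.2 v = L ⟨p.1, hu⟩ v :=
  hp.2 v

theorem exists_mk_mem_DFomega {u : V} (hu : u ∈ F) : ∃ α, (u, α) ∈ DFomega F L := by
  obtain ⟨α, hα⟩ := LinearMap.exists_extend (L ⟨u, hu⟩)
  exact ⟨α, hu, fun v => LinearMap.congr_fun hα v⟩

theorem mk_zero_mem_DFomega {f : Module.Dual ℝ V} (hf : f ∈ F.dualAnnihilator) :
    ((0 : V), f) ∈ DFomega F L :=
  ⟨F.zero_mem, fun v => by
    rw [(Submodule.mem_dualAnnihilator f).1 hf v v.2]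
    exact (LinearMap.congr_fun (map_zero L) v).symm⟩

theorem map_fst_DFomega : (DFomega F L).map (LinearMap.fst ℝ V (Module.Dual ℝ V)) = F := by
  ext u
  refine ⟨?_, fun hu => ?_⟩
  · rintro ⟨p, ⟨hu, -⟩, rfl⟩
    exact hu
  · obtain ⟨α, hα⟩ := exists_mk_mem_DFomega (L := L) hu
    exact ⟨(u, α), hα, rfl⟩

theorem fst_mem_of_mem_diracOrtho_DFomega {p : V × Module.Dual ℝ V}
    (hp : p ∈ diracOrtho (DFomega F L)) : p.1 ∈ F := by
  refine (Subspace.forall_mem_dualAnnihilator_apply_eq_zero_iff F p.1).1 fun f hf => ?_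
  simpa using hp _ (mk_zero_mem_DFomega (L := L) hf)

theorem DFomega_le_diracOrtho (hskew : ∀ u v : F, L u v = - L v u) :
    DFomega F L ≤ diracOrtho (DFomega F L) := by
  intro p hp q hq
  obtain ⟨hpF, hpL⟩ := hp
  obtain ⟨hqF, hqL⟩ := hq
  rw [hpL ⟨q.1, hqF⟩, hqL ⟨p.1, hpF⟩, hskew]
  exact neg_add_cancel _

theorem diracOrtho_DFomega_le (hskew : ∀ u v : F, L u v = - L v u) :
    diracOrtho (DFomega F L) ≤ DFomega F L := by
  intro p hp
  have hu := fst_mem_of_mem_diracOrtho_DFomega hp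
  refine ⟨hu, fun v => ?_⟩
  obtain ⟨α, hα⟩ := exists_mk_mem_DFomega (L := L) v.2
  have hpairing : p.2 v + α p.1 = 0 := hp _ hα
  rw [snd_apply_of_mem_DFomega hα v.2 ⟨p.1, hu⟩] at hpairing
  rw [hskew]
  exact eq_neg_of_add_eq_zero_left hpairing

end

theorem stmt4_general {V : Type*} [AddCommGroup V] [Module ℝ V]
    (F : Submodule ℝ V) (L : F →ₗ[ℝ] Module.Dual ℝ F)
    (hskew : ∀ u v : F, L u v = - L v u) :
    diracOrtho (DFomega F L) = DFomega F L ∧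
    Submodule.map (LinearMap.fst ℝ V (Module.Dual ℝ V)) (DFomega F L) = F ∧
    ∀ p ∈ DFomega F L, ∀ (hu : p.1 ∈ F) (v : F), p.2 v = L ⟨p.1, hu⟩ v :=
  ⟨le_antisymm (diracOrtho_DFomega_le hskew) (DFomega_le_diracOrtho hskew),
    map_fst_DFomega, fun _ hp => snd_apply_of_mem_DFomega hp⟩

/-- `D_{F,ω}` is a linear Dirac structure whose projection to `V` is `F` and whose
induced two-form on `F` agrees with `ω`. -/
theorem stmt4 {V : Type*} [AddCommGroup V] [Module ℝ V] [FiniteDimensional ℝ V]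
    (F : Submodule ℝ V) (L : F →ₗ[ℝ] Module.Dual ℝ F)
    (hskew : ∀ u v : F, L u v = - L v u) :
    diracOrtho (DFomega F L) = DFomega F L ∧
    Submodule.map (LinearMap.fst ℝ V (Module.Dual ℝ V)) (DFomega F L) = F ∧
    ∀ p ∈ DFomega F L, ∀ (hu : p.1 ∈ F) (v : F), p.2 v = L ⟨p.1, hu⟩ v :=
  stmt4_general F L hskew
end

section
/- Any discretization map R_d : TM → M × M is a local diffeomorphism around each point of the zero section of TM; i.e., for each x ∈ M, the differential of R_d at 0_x is a linear isomorphism from T_{0_x}(TM) to T_{(x,x)}(M × M). -/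
open Manifold Bundle Set

lemma key_chart
    {E : Type*} [NormedAddCommGroup E] [NormedSpace ℝ E]
    {H : Type*} [TopologicalSpace H] (I : ModelWithCorners ℝ E H)
    {M : Type*} [TopologicalSpace M] [ChartedSpace H M] [IsManifold I (⊤ : ℕ∞) M]
    (x : M) (w : E) :
    extChartAt I.tangent (⟨x, 0⟩ : TangentBundle I M) ⟨x, w⟩ = (extChartAt I x x, w) := by
  simp only [extChartAt, OpenPartialHomeomorph.extend, FiberBundle.chartedSpace_chartAt,
    mfld_simps]
  show (_, tangentCoordChange I x x x w) = _
  rw [tangentCoordChange_self (I := I) (mem_extChartAt_source (I := I) x)]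

lemma fiber_incl_hasMFDerivAt
    {E : Type*} [NormedAddCommGroup E] [NormedSpace ℝ E]
    {H : Type*} [TopologicalSpace H] (I : ModelWithCorners ℝ E H)
    {M : Type*} [TopologicalSpace M] [ChartedSpace H M] [IsManifold I (⊤ : ℕ∞) M]
    (x : M) :
    HasMFDerivAt 𝓘(ℝ, E) I.tangent (fun w : E => (⟨x, w⟩ : TangentBundle I M)) 0
      ((0 : E →L[ℝ] E).prod (ContinuousLinearMap.id ℝ E)) := by
  refine ⟨(FiberBundle.continuous_totalSpaceMk E (TangentSpace I) x).continuousAt, ?_⟩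
  have : writtenInExtChartAt 𝓘(ℝ, E) I.tangent (0 : E)
      (fun w : E => (⟨x, w⟩ : TangentBundle I M)) =
      fun w : E => (extChartAt I x x, w) := by
    funext w
    simp only [writtenInExtChartAt, Function.comp, mfld_simps]
    exact key_chart I x w
  rw [this]
  simp only [mfld_simps]
  exact ((hasFDerivAt_const _ _).prodMk (hasFDerivAt_id _)).hasFDerivWithinAt

lemma zero_sec_mfderiv
    {E : Type*} [NormedAddCommGroup E] [NormedSpace ℝ E]
    {H : Type*} [TopologicalSpace H] (I : ModelWithCorners ℝ E H)
    {M : Type*} [TopologicalSpace M] [ChartedSpace H M] [IsManifold I (⊤ : ℕ∞) M]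
    (x : M) (v : E) :
    (show E × E from
      mfderiv I I.tangent (fun y : M => (⟨y, 0⟩ : TangentBundle I M)) x v) = (v, 0) := by
  have h := TangentBundle.tangentMap_tangentBundle_pure (I := I) (⟨x, v⟩ : TangentBundle I M)
  have h2 := congrArg (fun q : TangentBundle I.tangent (TangentBundle I M) =>
    (show E × E from q.snd)) h
  simp [tangentMap, Bundle.zeroSection] at h2
  exact h2

/-- Any discretization map `R_d : TM → M × M` is a local diffeomorphism around the zero
section: its differential at each `0_x` is a linear isomorphism
`T_{0_x}(TM) → T_{(x,x)}(M × M)`. -/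
theorem stmt12
    {E : Type*} [NormedAddCommGroup E] [NormedSpace ℝ E]
    {H : Type*} [TopologicalSpace H] (I : ModelWithCorners ℝ E H)
    {M : Type*} [TopologicalSpace M] [ChartedSpace H M] [IsManifold I (⊤ : ℕ∞) M]
    (Rd : TangentBundle I M → M × M)
    (hRd : ContMDiff I.tangent (I.prod I) (⊤ : ℕ∞) Rd)
    -- (D1)
    (hD1 : ∀ x : M, Rd ⟨x, 0⟩ = (x, x))
    -- (D2): the fiberwise differentials at `0_x` of the two components differ by the
    -- identity of `T_xM`
    (hD2 : ∀ x : M, ∀ v : E,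
      (show E from mfderiv 𝓘(ℝ, E) I (fun w : E => (Rd ⟨x, w⟩).2) 0 v) -
        (show E from mfderiv 𝓘(ℝ, E) I (fun w : E => (Rd ⟨x, w⟩).1) 0 v) = v) :
    ∀ x : M,
      Function.Bijective
        (mfderiv I.tangent (I.prod I) Rd (⟨x, 0⟩ : TangentBundle I M)) := by

  intro x
  have hRdM : MDifferentiableAt I.tangent (I.prod I) Rd (⟨x, 0⟩ : TangentBundle I M) :=
    hRd.mdifferentiableAt (by simp)
  set L := mfderiv I.tangent (I.prod I) Rd (⟨x, 0⟩ : TangentBundle I M) with hLdef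
  -- the zero section is differentiable
  have hsM : MDifferentiableAt I I.tangent (fun y : M => (⟨y, 0⟩ : TangentBundle I M)) x :=
    (Bundle.contMDiff_zeroSection (n := ((⊤ : ℕ∞) : WithTop ℕ∞)) ℝ (TangentSpace I : M → Type _)).mdifferentiableAt (by simp)
  -- Fact 1 : L (v, 0) = (v, v)
  have fact1 : ∀ v : E, (show E × E from L (show E × E from (v, 0))) = (v, v) := by
    intro v
    have hcomp := mfderiv_comp (I' := I.tangent) x hRdM hsM
    have e1 : (Rd ∘ fun y : M => (⟨y, 0⟩ : TangentBundle I M)) = fun y : M => (id y, id y) := by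
      funext y; exact hD1 y
    rw [e1] at hcomp
    have hd : (show E × E from
        (mfderiv I (I.prod I) (fun y : M => (id y, id y)) x) v) = (v, v) := by
      rw [mdifferentiableAt_id.mfderiv_prod mdifferentiableAt_id, mfderiv_id]
      rfl
    have hS : (show E × E from
        (mfderiv I I.tangent (fun y : M => (⟨y, 0⟩ : TangentBundle I M)) x) v) = (v, 0) :=
      zero_sec_mfderiv I x v
    calc (show E × E from L (show E × E from (v, 0)))
        = (show E × E from
            L ((mfderiv I I.tangent (fun y : M => (⟨y, 0⟩ : TangentBundle I M)) x) v)) := by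
          exact congrArg (fun z : E × E => (show E × E from L z)) hS.symm
      _ = (show E × E from (mfderiv I (I.prod I) (fun y : M => (id y, id y)) x) v) := by
          rw [hcomp]; rfl
      _ = (v, v) := hd
  -- the fiber inclusion
  have hι := fiber_incl_hasMFDerivAt I x
  have hιM : MDifferentiableAt 𝓘(ℝ, E) I.tangent
      (fun w : E => (⟨x, w⟩ : TangentBundle I M)) 0 := hι.mdifferentiableAt
  have hcomp2 := mfderiv_comp (I' := I.tangent) (0 : E) hRdM hιM
  rw [hι.mfderiv] at hcomp2
  have hRdι : MDifferentiableAt 𝓘(ℝ, E) (I.prod I)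
      (Rd ∘ fun w : E => (⟨x, w⟩ : TangentBundle I M)) 0 :=
    MDifferentiableAt.comp (I' := I.tangent) (0 : E) hRdM hιM
  -- the two component derivatives
  have c1 : mfderiv 𝓘(ℝ, E) I (fun w : E => (Rd ⟨x, w⟩).1) 0 =
      (ContinuousLinearMap.fst ℝ E E).comp
        (L.comp ((0 : E →L[ℝ] E).prod (ContinuousLinearMap.id ℝ E))) := by
    have h := mfderiv_comp (I' := I.prod I) (0 : E) mdifferentiableAt_fst hRdι
    rw [mfderiv_fst, hcomp2] at h
    exact h
  have c2 : mfderiv 𝓘(ℝ, E) I (fun w : E => (Rd ⟨x, w⟩).2) 0 =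
      (ContinuousLinearMap.snd ℝ E E).comp
        (L.comp ((0 : E →L[ℝ] E).prod (ContinuousLinearMap.id ℝ E))) := by
    have h := mfderiv_comp (I' := I.prod I) (0 : E) mdifferentiableAt_snd hRdι
    rw [mfderiv_snd, hcomp2] at h
    exact h
  -- Fact 2 : the second component of L (0, w) minus the first equals w
  have fact2 : ∀ w : E,
      (show E × E from L (show E × E from (0, w))).2 -
        (show E × E from L (show E × E from (0, w))).1 = w := by
    intro w
    have h := hD2 x w
    rw [c1, c2] at h
    exact h
  set p : E → E := fun w => (show E × E from L (show E × E from (0, w))).1 with hp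
  set q : E → E := fun w => (show E × E from L (show E × E from (0, w))).2 with hq
  have hpq : ∀ w : E, q w = w + p w := fun w => sub_eq_iff_eq_add.mp (fact2 w)
  have keyL : ∀ u : E × E,
      (show E × E from L u) = (u.1 + p u.2, u.1 + q u.2) := by
    intro u
    have hsplit : u = ((u.1, 0) : E × E) + ((0, u.2) : E × E) := by simp
    calc (show E × E from L u)
        = (show E × E from L (show E × E from ((u.1, 0) : E × E) + ((0, u.2) : E × E))) := by
          exact congrArg (fun z : E × E => (show E × E from L z)) hsplit
      _ = (show E × E from L (show E × E from (u.1, 0))) +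
            (show E × E from L (show E × E from (0, u.2))) := map_add L _ _
      _ = (u.1 + p u.2, u.1 + q u.2) := by
          rw [fact1 u.1]
          exact Prod.ext rfl rfl
  constructor
  · intro a b hab
    have h2 : (show E × E from L a) = (show E × E from L b) := by rw [hab]
    rw [keyL a, keyL b, Prod.mk.injEq] at h2
    obtain ⟨h3, h4⟩ := h2
    set a1 := (show E × E from a).1
    set a2 := (show E × E from a).2
    set b1 := (show E × E from b).1
    set b2 := (show E × E from b).2
    rw [hpq a2, hpq b2] at h4
    have ha2 : a2 = b2 := by
      have e : a2 = (a1 + (a2 + p a2)) - (a1 + p a2) := by abel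
      rw [e, h3, h4]; abel
    have ha1 : a1 = b1 := by
      have := h3
      rw [ha2] at this
      exact add_right_cancel this
    exact Prod.ext ha1 ha2
  · intro c
    set c1 := (show E × E from c).1
    set c2 := (show E × E from c).2
    refine ⟨(show E × E from (c1 - p (c2 - c1), c2 - c1)), ?_⟩
    have h := keyL (c1 - p (c2 - c1), c2 - c1)
    rw [hpq (c2 - c1)] at h
    set d := p (c2 - c1) with hd
    have h2 : (show E × E from L ((c1 - p (c2 - c1), c2 - c1) : E × E)) = (c1, c2) := by
      rw [h, Prod.mk.injEq]
      dsimp only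
      constructor <;> abel
    exact h2
end

section
/- For the family of discretization maps R_d(q, q̇) = (q − θ q̇, q + (1−θ) q̇) on Q = ℝⁿ with θ ∈ [0,1], and a one-form α = α_{ij} qʲ dqⁱ with constant coefficients α_{ij} for which the matrix (α_{ij} − α_{ji}) is nonzero, the identity R_d*(pr₂* dα − pr₁* dα) = d_T dα holds if and only if θ = 1/2. -/
/-!
Both sides are bilinear in the tangent vectors. Writing `B u v = u ⬝ᵥ (A - Aᵀ) *ᵥ v`, we have
`dα = -B`, and expanding `B` at the two endpoints of the discretization leaves the mixed terms
`B q̇ q̇'` with coefficient `θ² - (1 - θ)² = 2θ - 1`; everything else is exactly `d_T dα`. So the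
identity holds iff `(2θ - 1) • B = 0`, i.e. iff `θ = 1/2` as soon as `A - Aᵀ ≠ 0`.
-/

open Matrix

theorem LinearMap.BilinForm.apply_add_smul_sub_apply_sub_smul {R M : Type*} [CommRing R]
    [AddCommGroup M] [Module R M] (B : LinearMap.BilinForm R M) (θ : R) (x y x' y' : M) :
    B (x + (1 - θ) • y) (x' + (1 - θ) • y') - B (x - θ • y) (x' - θ • y')
      = B x y' + B y x' + (1 - 2 * θ) * B y y' := by
  simp only [map_add, map_sub, map_smul, LinearMap.add_apply, LinearMap.sub_apply,
    LinearMap.smul_apply, smul_eq_mul]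
  ring

theorem LinearMap.BilinForm.forall_mul_apply_eq_zero_iff {K M : Type*} [Field K]
    [AddCommGroup M] [Module K M] {B : LinearMap.BilinForm K M} (hB : B ≠ 0) (c : K) :
    (∀ x y, c * B x y = 0) ↔ c = 0 := by
  rw [← smul_eq_zero_iff_left hB, LinearMap.ext_iff₂]
  simp

section SkewPart

variable {n R : Type*} [Fintype n] [DecidableEq n] [CommRing R]

theorem Matrix.toBilin'_sub_transpose_apply (A : Matrix n n R) (u v : n → R) :
    toBilin' (A - Aᵀ) u v = ∑ i, ∑ j, A i j * (u i * v j - u j * v i) := by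
  have hswap : ∑ i, ∑ j, u i * A j i * v j = ∑ i, ∑ j, A i j * (u j * v i) := by
    rw [Finset.sum_comm]
    exact Finset.sum_congr rfl fun i _ => Finset.sum_congr rfl fun j _ => by ring
  simp only [toBilin'_apply, sub_apply, transpose_apply, mul_sub, sub_mul, Finset.sum_sub_distrib,
    hswap]
  congr 1
  exact Finset.sum_congr rfl fun i _ => Finset.sum_congr rfl fun j _ => by ring

theorem Matrix.toBilin'_sub_transpose_swap (A : Matrix n n R) (u v : n → R) :
    toBilin' (A - Aᵀ) v u = -toBilin' (A - Aᵀ) u v := by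
  simp only [toBilin'_sub_transpose_apply, ← Finset.sum_neg_distrib]
  exact Finset.sum_congr rfl fun i _ => Finset.sum_congr rfl fun j _ => by ring

theorem Matrix.sum_sum_sub_transpose_mul_eq (A : Matrix n n R) (x y x' y' : n → R) :
    ∑ i, ∑ j, (A j i - A i j) * (x i * y' j - x' i * y j)
      = -(toBilin' (A - Aᵀ) x y' + toBilin' (A - Aᵀ) y x') := by
  rw [toBilin'_sub_transpose_swap A x' y, neg_add, neg_neg, toBilin'_apply, toBilin'_apply,
    ← Finset.sum_neg_distrib, ← Finset.sum_add_distrib]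
  refine Finset.sum_congr rfl fun i _ => ?_
  rw [← Finset.sum_neg_distrib, ← Finset.sum_add_distrib]
  refine Finset.sum_congr rfl fun j _ => ?_
  simp only [sub_apply, transpose_apply]
  ring

theorem Matrix.toBilin'_sub_transpose_ne_zero {A : Matrix n n R} (hA : ∃ i j, A i j ≠ A j i) :
    toBilin' (A - Aᵀ) ≠ 0 := by
  obtain ⟨i, j, hij⟩ := hA
  rw [map_ne_zero_iff _ toBilin'.injective]
  exact fun h => hij (sub_eq_zero.1 (congrFun (congrFun h i) j))

end SkewPart

theorem stmt16_general {n : ℕ} (A : Matrix (Fin n) (Fin n) ℝ)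
    (hA : ∃ i j, A i j ≠ A j i) (θ : ℝ) :
    let E := Fin n → ℝ
    let dα : E → E → ℝ := fun u v => -∑ i, ∑ j, A i j * (u i * v j - u j * v i)
    let dT : (E × E) → (E × E) → ℝ :=
      fun ξ η => ∑ i, ∑ j, (A j i - A i j) * (ξ.1 i * η.2 j - η.1 i * ξ.2 j)
    (∀ ξ η : E × E,
      dα (ξ.1 + (1 - θ) • ξ.2) (η.1 + (1 - θ) • η.2)
        - dα (ξ.1 - θ • ξ.2) (η.1 - θ • η.2) = dT ξ η) ↔ θ = 1/2 := by
  intro E dα dT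
  set B := toBilin' (A - Aᵀ)
  have hdα : ∀ u v, dα u v = -B u v := fun u v => by rw [toBilin'_sub_transpose_apply]
  have hdT : ∀ ξ η : E × E, dT ξ η = -(B ξ.1 η.2 + B ξ.2 η.1) := fun ξ η =>
    sum_sum_sub_transpose_mul_eq A ξ.1 ξ.2 η.1 η.2
  have hpull : ∀ ξ η : E × E,
      dα (ξ.1 + (1 - θ) • ξ.2) (η.1 + (1 - θ) • η.2) - dα (ξ.1 - θ • ξ.2) (η.1 - θ • η.2)
        = dT ξ η - (1 - 2 * θ) * B ξ.2 η.2 := fun ξ η => by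
    rw [hdα, hdα, hdT, neg_sub_neg, ← neg_sub, B.apply_add_smul_sub_apply_sub_smul]
    ring
  simp only [hpull, sub_eq_self, Prod.forall, forall_const]
  rw [LinearMap.BilinForm.forall_mul_apply_eq_zero_iff (toBilin'_sub_transpose_ne_zero hA)]
  constructor <;> intro h <;> linarith

/-- For the discretization maps `R_d(q,q̇) = (q − θq̇, q + (1−θ)q̇)` on `ℝⁿ` and a
one-form `α = α_{ij} qʲ dqⁱ` with constant coefficients whose skew part is nonzero, the
pullback identity `R_d*(pr₂*dα − pr₁*dα) = d_T dα` holds iff `θ = 1/2`. -/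
theorem stmt16 {n : ℕ} (A : Matrix (Fin n) (Fin n) ℝ)
    (hA : ∃ i j, A i j ≠ A j i) (θ : ℝ) (hθ : θ ∈ Set.Icc (0:ℝ) 1) :
    let E := Fin n → ℝ
    let dα : E → E → ℝ := fun u v => -∑ i, ∑ j, A i j * (u i * v j - u j * v i)
    let dT : (E × E) → (E × E) → ℝ :=
      fun ξ η => ∑ i, ∑ j, (A j i - A i j) * (ξ.1 i * η.2 j - η.1 i * ξ.2 j)
    (∀ ξ η : E × E,
      dα (ξ.1 + (1 - θ) • ξ.2) (η.1 + (1 - θ) • η.2)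
        - dα (ξ.1 - θ • ξ.2) (η.1 - θ • η.2) = dT ξ η) ↔ θ = 1/2 :=
  stmt16_general A hA θ
end

section
/- Let M be a smooth manifold, M₀ ⊆ M an embedded submanifold with inclusion i : M₀ → M, and P : M → M₀ a smooth map with P ∘ i = id_{M₀} (a projector). If R_d : TM → M × M is a discretization map, then R_d^{M₀} := (P × P) ∘ R_d ∘ Ti : TM₀ → M₀ × M₀ is a discretization map on M₀: it maps the zero vector 0_x to (x,x) for x ∈ M₀, and T_{0_x}(R_d^{M₀})² − T_{0_x}(R_d^{M₀})¹ = id_{T_xM₀}. -/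
open Manifold Bundle

private lemma fiber_incl_smooth
    {E : Type*} [NormedAddCommGroup E] [NormedSpace ℝ E]
    {H : Type*} [TopologicalSpace H] (I : ModelWithCorners ℝ E H)
    {M : Type*} [TopologicalSpace M] [ChartedSpace H M] [IsManifold I ((⊤ : ℕ∞) : WithTop ℕ∞) M]
    (x₀ : M) :
    ContMDiff 𝓘(ℝ, E) I.tangent ((⊤ : ℕ∞) : WithTop ℕ∞) (fun w : E => (⟨x₀, w⟩ : TangentBundle I M)) := by
  intro w
  show ContMDiffAt 𝓘(ℝ, E) (I.prod 𝓘(ℝ, E)) ((⊤ : ℕ∞) : WithTop ℕ∞) (fun w : E => (⟨x₀, w⟩ : TangentBundle I M)) w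
  rw [contMDiffAt_totalSpace]
  refine ⟨contMDiffAt_const, ?_⟩
  have hb : x₀ ∈ (trivializationAt E (TangentSpace I) x₀).baseSet :=
    FiberBundle.mem_baseSet_trivializationAt E (TangentSpace I) x₀
  have h : ∀ u : E, (trivializationAt E (TangentSpace I) x₀ ⟨x₀, u⟩).2
      = (show E →L[ℝ] E from
          (trivializationAt E (TangentSpace I) x₀).continuousLinearMapAt ℝ x₀) u := by
    intro u
    show _ = (trivializationAt E (TangentSpace I) x₀).continuousLinearMapAt ℝ x₀ u
    rw [Trivialization.continuousLinearMapAt_apply]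
    simp only [Trivialization.coe_linearMapAt]
    rw [if_pos hb]
  simp only [h]
  exact ((show E →L[ℝ] E from
      (trivializationAt E (TangentSpace I) x₀).continuousLinearMapAt ℝ x₀).contMDiff).contMDiffAt

/-- If `P : M → M₀` is a smooth projector onto a submanifold `M₀` (with smooth inclusion
`i` satisfying `P ∘ i = id`) and `R_d : TM → M × M` is a discretization map, then
`R_d^{M₀} := (P × P) ∘ R_d ∘ Ti : TM₀ → M₀ × M₀` is a discretization map on `M₀`. -/
theorem stmt17
    {E : Type*} [NormedAddCommGroup E] [NormedSpace ℝ E]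
    {H : Type*} [TopologicalSpace H] (I : ModelWithCorners ℝ E H)
    {M : Type*} [TopologicalSpace M] [ChartedSpace H M] [IsManifold I ((⊤ : ℕ∞) : WithTop ℕ∞) M]
    {E₀ : Type*} [NormedAddCommGroup E₀] [NormedSpace ℝ E₀]
    {H₀ : Type*} [TopologicalSpace H₀] (I₀ : ModelWithCorners ℝ E₀ H₀)
    {M₀ : Type*} [TopologicalSpace M₀] [ChartedSpace H₀ M₀]
    [IsManifold I₀ ((⊤ : ℕ∞) : WithTop ℕ∞) M₀]
    (i : M₀ → M) (hi : ContMDiff I₀ I (⊤ : ℕ∞) i)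
    (P : M → M₀) (hP : ContMDiff I I₀ (⊤ : ℕ∞) P)
    (hPi : ∀ x : M₀, P (i x) = x)
    (Rd : TangentBundle I M → M × M)
    (hRd : ContMDiff I.tangent (I.prod I) (⊤ : ℕ∞) Rd)
    -- (D1) for `R_d`
    (hD1 : ∀ x : M, Rd ⟨x, 0⟩ = (x, x))
    -- (D2) for `R_d`
    (hD2 : ∀ x : M, ∀ v : E,
      (show E from mfderiv 𝓘(ℝ, E) I (fun w : E => (Rd ⟨x, w⟩).2) 0 v) -
        (show E from mfderiv 𝓘(ℝ, E) I (fun w : E => (Rd ⟨x, w⟩).1) 0 v) = v) :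
    let RdM0 : TangentBundle I₀ M₀ → M₀ × M₀ :=
      fun ξ => (P (Rd (tangentMap I₀ I i ξ)).1, P (Rd (tangentMap I₀ I i ξ)).2)
    -- (D1) for `R_d^{M₀}`
    (∀ x : M₀, RdM0 ⟨x, 0⟩ = (x, x)) ∧
    -- (D2) for `R_d^{M₀}`
    (∀ x : M₀, ∀ v : E₀,
      (show E₀ from mfderiv 𝓘(ℝ, E₀) I₀ (fun w : E₀ => (RdM0 ⟨x, w⟩).2) 0 v) -
        (show E₀ from mfderiv 𝓘(ℝ, E₀) I₀ (fun w : E₀ => (RdM0 ⟨x, w⟩).1) 0 v) = v) := by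
  intro RdM0
  constructor
  · intro x
    show (P (Rd ⟨i x, mfderiv I₀ I i x 0⟩).1, P (Rd ⟨i x, mfderiv I₀ I i x 0⟩).2) = (x, x)
    rw [(mfderiv I₀ I i x).map_zero, hD1, hPi]
  · intro x v
    -- differentiability of `w ↦ Rd ⟨i x, w⟩`
    have hRdι : ContMDiff 𝓘(ℝ, E) (I.prod I) ((⊤ : ℕ∞) : WithTop ℕ∞) (fun w : E => Rd ⟨i x, w⟩) :=
      hRd.comp (fiber_incl_smooth I (i x))
    have hg₁ : MDifferentiableAt 𝓘(ℝ, E) I (fun w : E => (Rd ⟨i x, w⟩).1) 0 :=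
      ((contMDiff_fst.comp hRdι).mdifferentiableAt (by simp))
    have hg₂ : MDifferentiableAt 𝓘(ℝ, E) I (fun w : E => (Rd ⟨i x, w⟩).2) 0 :=
      ((contMDiff_snd.comp hRdι).mdifferentiableAt (by simp))
    have h0 : (mfderiv I₀ I i x) (0 : E₀) = 0 := (mfderiv I₀ I i x).map_zero
    have key : ∀ g : E → M, MDifferentiableAt 𝓘(ℝ, E) I g 0 → g 0 = i x →
        mfderiv 𝓘(ℝ, E₀) I₀ (fun w : E₀ => P (g ((mfderiv I₀ I i x) w))) 0 v
          = mfderiv I I₀ P (i x) (mfderiv 𝓘(ℝ, E) I g 0 ((mfderiv I₀ I i x) v)) := by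
      intro g hg hg0
      have hDfd : MDifferentiableAt 𝓘(ℝ, E₀) 𝓘(ℝ, E)
          (show E₀ →L[ℝ] E from mfderiv I₀ I i x) 0 :=
        ((show E₀ →L[ℝ] E from mfderiv I₀ I i x).contMDiff.mdifferentiableAt (n := 1) one_ne_zero)
      have hPat : MDifferentiableAt I I₀ P (g 0) := by
        rw [hg0]; exact hP.mdifferentiableAt (by simp)
      have hPg : MDifferentiableAt 𝓘(ℝ, E) I₀ (fun u : E => P (g u))
          ((show E₀ →L[ℝ] E from mfderiv I₀ I i x) 0) := by
        erw [h0]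
        exact MDifferentiableAt.comp 0 hPat hg
      have hc1 : mfderiv 𝓘(ℝ, E₀) I₀ ((fun u : E => P (g u)) ∘
            (show E₀ →L[ℝ] E from mfderiv I₀ I i x)) 0
          = (mfderiv 𝓘(ℝ, E) I₀ (fun u : E => P (g u))
              ((show E₀ →L[ℝ] E from mfderiv I₀ I i x) 0)).comp
              (mfderiv 𝓘(ℝ, E₀) 𝓘(ℝ, E) (show E₀ →L[ℝ] E from mfderiv I₀ I i x) 0) :=
        mfderiv_comp (0 : E₀) hPg hDfd
      have hc2 : mfderiv 𝓘(ℝ, E) I₀ ((fun z : M => P z) ∘ g) 0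
          = (mfderiv I I₀ P (g 0)).comp (mfderiv 𝓘(ℝ, E) I g 0) :=
        mfderiv_comp 0 hPat hg
      have hc3 : mfderiv 𝓘(ℝ, E₀) 𝓘(ℝ, E) (show E₀ →L[ℝ] E from mfderiv I₀ I i x) 0
          = (show E₀ →L[ℝ] E from mfderiv I₀ I i x) := by
        rw [mfderiv_eq_fderiv]
        exact ContinuousLinearMap.fderiv _
      show mfderiv 𝓘(ℝ, E₀) I₀ ((fun u : E => P (g u)) ∘
            (show E₀ →L[ℝ] E from mfderiv I₀ I i x)) 0 v = _
      rw [hc1, hc3]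
      show mfderiv 𝓘(ℝ, E) I₀ ((fun z : M => P z) ∘ g) ((mfderiv I₀ I i x) 0)
          ((mfderiv I₀ I i x) v) = _
      erw [h0, hc2, hg0]
      rfl
    have e₂ := key (fun w : E => (Rd ⟨i x, w⟩).2) hg₂
      (show (Rd ⟨i x, (0 : E)⟩).2 = i x from congrArg Prod.snd (hD1 (i x)))
    have e₁ := key (fun w : E => (Rd ⟨i x, w⟩).1) hg₁
      (show (Rd ⟨i x, (0 : E)⟩).1 = i x from congrArg Prod.fst (hD1 (i x)))
    beta_reduce at e₁ e₂
    have hfun : (fun z : M₀ => P (i z)) = id := funext hPi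
    have hcomp : mfderiv I₀ I₀ ((fun z : M => P z) ∘ i) x
        = (mfderiv I I₀ P (i x)).comp (mfderiv I₀ I i x) :=
      mfderiv_comp x (hP.mdifferentiableAt (by simp)) (hi.mdifferentiableAt (by simp))
    calc (show E₀ from mfderiv 𝓘(ℝ, E₀) I₀
          (fun w : E₀ => P ((Rd ⟨i x, (mfderiv I₀ I i x) w⟩).2)) 0 v)
        - (show E₀ from mfderiv 𝓘(ℝ, E₀) I₀
          (fun w : E₀ => P ((Rd ⟨i x, (mfderiv I₀ I i x) w⟩).1)) 0 v)
        = (show E₀ from mfderiv I I₀ P (i x)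
            (mfderiv 𝓘(ℝ, E) I (fun w : E => (Rd ⟨i x, w⟩).2) 0 ((mfderiv I₀ I i x) v)))
          - (show E₀ from mfderiv I I₀ P (i x)
            (mfderiv 𝓘(ℝ, E) I (fun w : E => (Rd ⟨i x, w⟩).1) 0 ((mfderiv I₀ I i x) v))) := by
          rw [e₂, e₁]
      _ = show E₀ from mfderiv I I₀ P (i x)
            ((show E from mfderiv 𝓘(ℝ, E) I (fun w : E => (Rd ⟨i x, w⟩).2) 0
                ((mfderiv I₀ I i x) v))
              - (show E from mfderiv 𝓘(ℝ, E) I (fun w : E => (Rd ⟨i x, w⟩).1) 0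
                ((mfderiv I₀ I i x) v))) :=
          ((mfderiv I I₀ P (i x)).map_sub _ _).symm
      _ = show E₀ from mfderiv I I₀ P (i x) ((mfderiv I₀ I i x) v) :=
          congrArg _ (hD2 (i x) ((mfderiv I₀ I i x) v))
      _ = show E₀ from mfderiv I₀ I₀ ((fun z : M => P z) ∘ i) x v := by rw [hcomp]; rfl
      _ = v := by
          show mfderiv I₀ I₀ (fun z : M₀ => P (i z)) x v = v
          rw [hfun, mfderiv_id]
          rfl
end

section
/- On the unit sphere S^{n−1} ⊂ ℝⁿ, the map R̃_d(x, v) = ((x − v/2)/‖x − v/2‖, (x + v/2)/‖x + v/2‖), defined for tangent vectors v ∈ T_x S^{n−1} (i.e., x·v = 0) with ‖v‖ < 2, satisfies the discretization map axioms: R̃_d(x, 0) = (x, x), and the derivative at v = 0 of the second component minus the derivative at v = 0 of the first component, as linear maps T_x S^{n−1} → T_x S^{n−1}, equals the identity. Moreover its inverse is given by R̃_d⁻¹(x₀, x₁) = ((x₀+x₁)/‖x₀+x₁‖, 2(x₁−x₀)/‖x₀+x₁‖) whenever x₀ + x₁ ≠ 0. -/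
open scoped RealInnerProductSpace

lemma sphere_fderiv_aux {n : ℕ} (x w : EuclideanSpace ℝ (Fin n)) (hx : ‖x‖ = 1) (c : ℝ) :
    fderiv ℝ (fun v : EuclideanSpace ℝ (Fin n) => ‖x + c • v‖⁻¹ • (x + c • v)) 0 w
      = c • w - (c * ⟪x, w⟫) • x := by
  set A : EuclideanSpace ℝ (Fin n) → EuclideanSpace ℝ (Fin n) := fun v => x + c • v with hAdef
  have hA0 : A 0 = x := by simp [A]
  have hA : HasFDerivAt A (c • ContinuousLinearMap.id ℝ (EuclideanSpace ℝ (Fin n))) 0 := by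
    have := ((hasFDerivAt_id (𝕜 := ℝ) (0 : EuclideanSpace ℝ (Fin n))).const_smul c).const_add x
    simpa [A] using this
  have hq := hA.inner ℝ hA
  have hone : ⟪A 0, A 0⟫ = (1:ℝ) := by
    rw [hA0, real_inner_self_eq_norm_mul_norm, hx]; norm_num
  have hs : HasDerivAt (fun t : ℝ => (Real.sqrt t)⁻¹) (-(1/2)) ⟪A 0, A 0⟫ := by
    rw [hone]
    have h := (Real.hasDerivAt_sqrt (one_ne_zero)).inv (by simp)
    exact h.congr_deriv (by norm_num)
  have hinv := hs.comp_hasFDerivAt 0 hq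
  have hf := hinv.smul hA
  have hf' : HasFDerivAt (fun v => (Real.sqrt ⟪A v, A v⟫)⁻¹ • A v)
      ((Real.sqrt ⟪A 0, A 0⟫)⁻¹ • c • ContinuousLinearMap.id ℝ (EuclideanSpace ℝ (Fin n)) +
        ((-(1/2) : ℝ) • (fderivInnerCLM ℝ (A 0, A 0)).comp
          ((c • ContinuousLinearMap.id ℝ (EuclideanSpace ℝ (Fin n))).prod
            (c • ContinuousLinearMap.id ℝ (EuclideanSpace ℝ (Fin n))))).smulRight (A 0)) 0 := hf
  have hfun : (fun v : EuclideanSpace ℝ (Fin n) => ‖x + c • v‖⁻¹ • (x + c • v))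
      = fun v => (Real.sqrt ⟪A v, A v⟫)⁻¹ • A v := by
    funext v
    rw [real_inner_self_eq_norm_mul_norm, Real.sqrt_mul_self (norm_nonneg _)]
  rw [hfun, hf'.fderiv]
  have h2 : Real.sqrt ⟪A 0, A 0⟫ = 1 := by rw [hone]; simp
  rw [h2]
  simp only [ContinuousLinearMap.add_apply, ContinuousLinearMap.smul_apply,
    ContinuousLinearMap.smulRight_apply, ContinuousLinearMap.coe_comp', Function.comp_apply,
    ContinuousLinearMap.prod_apply, ContinuousLinearMap.coe_id', id_eq, fderivInnerCLM_apply,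
    hA0, inv_one, one_smul]
  rw [real_inner_smul_right, real_inner_smul_left, real_inner_comm w x]
  simp only [smul_eq_mul]
  match_scalars <;> ring

/-- On the unit sphere `S^{n−1} ⊂ ℝⁿ`, the map
`R̃_d(x,v) = ((x − v/2)/‖x − v/2‖, (x + v/2)/‖x + v/2‖)` satisfies the discretization
map axioms, and its inverse is `(x₀,x₁) ↦ ((x₀+x₁)/‖x₀+x₁‖, 2(x₁−x₀)/‖x₀+x₁‖)`. -/
theorem stmt19 {n : ℕ} :
    let E := EuclideanSpace ℝ (Fin n)
    let R1 : E → E → E := fun x v => ‖x - (1/2 : ℝ) • v‖⁻¹ • (x - (1/2 : ℝ) • v)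
    let R2 : E → E → E := fun x v => ‖x + (1/2 : ℝ) • v‖⁻¹ • (x + (1/2 : ℝ) • v)
    -- (D1)
    (∀ x : E, ‖x‖ = 1 → R1 x 0 = x ∧ R2 x 0 = x) ∧
    -- (D2): on tangent vectors `w ∈ T_x S^{n−1}` the difference of differentials at
    -- `v = 0` is the identity
    (∀ x : E, ‖x‖ = 1 → ∀ w : E, ⟪x, w⟫ = 0 →
      fderiv ℝ (fun v : E => R2 x v) 0 w - fderiv ℝ (fun v : E => R1 x v) 0 w = w) ∧
    -- left inverse on the domain `{(x,v) | ‖x‖ = 1, x ⊥ v, ‖v‖ < 2}`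
    (∀ x v : E, ‖x‖ = 1 → ⟪x, v⟫ = 0 → ‖v‖ < 2 →
      ‖R1 x v + R2 x v‖⁻¹ • (R1 x v + R2 x v) = x ∧
      ‖R1 x v + R2 x v‖⁻¹ • ((2 : ℝ) • (R2 x v - R1 x v)) = v) ∧
    -- right inverse on pairs of unit vectors with `x₀ + x₁ ≠ 0`
    (∀ x₀ x₁ : E, ‖x₀‖ = 1 → ‖x₁‖ = 1 → x₀ + x₁ ≠ 0 →
      R1 (‖x₀ + x₁‖⁻¹ • (x₀ + x₁)) (‖x₀ + x₁‖⁻¹ • ((2 : ℝ) • (x₁ - x₀))) = x₀ ∧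
      R2 (‖x₀ + x₁‖⁻¹ • (x₀ + x₁)) (‖x₀ + x₁‖⁻¹ • ((2 : ℝ) • (x₁ - x₀))) = x₁) := by
  intro E R1 R2
  refine ⟨?_, ?_, ?_, ?_⟩
  · -- (D1)
    intro x hx
    constructor <;> simp [R1, R2, hx]
  · -- (D2)
    intro x hx w hw
    simp only [R1, R2]
    have hneg : (fun v : E => ‖x - (1/2 : ℝ) • v‖⁻¹ • (x - (1/2 : ℝ) • v))
        = fun v : E => ‖x + (-(1/2) : ℝ) • v‖⁻¹ • (x + (-(1/2) : ℝ) • v) := by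
      funext v
      rw [neg_smul, ← sub_eq_add_neg]
    rw [hneg, sphere_fderiv_aux x w hx ((1:ℝ)/2), sphere_fderiv_aux x w hx (-(1/2))]
    rw [hw]
    match_scalars <;> ring
  · -- left inverse
    intro x v hx hxv hv
    simp only [R1, R2]
    set N : ℝ := ‖x - (1/2 : ℝ) • v‖ with hNdef
    have hxv2 : ⟪x, (1/2 : ℝ) • v⟫ = 0 := by rw [real_inner_smul_right, hxv]; ring
    have hNsq : N ^ 2 = 1 + ‖v‖ ^ 2 / 4 := by
      rw [hNdef, norm_sub_sq_real, hxv2, hx, norm_smul]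
      simp
      ring
    have hN : 0 < N := by
      have h0 : (0:ℝ) ≤ N := norm_nonneg _
      nlinarith [sq_nonneg ‖v‖]
    have hNeq : ‖x + (1/2 : ℝ) • v‖ = N := by
      have h1 : ‖x + (1/2 : ℝ) • v‖ ^ 2 = 1 + ‖v‖ ^ 2 / 4 := by
        rw [norm_add_sq_real, hxv2, hx, norm_smul]
        simp
        ring
      have := congrArg Real.sqrt (h1.trans hNsq.symm)
      rw [hNdef]
      rw [Real.sqrt_sq (norm_nonneg _), Real.sqrt_sq hN.le] at this
      exact this
    have hsum : N⁻¹ • (x - (1/2 : ℝ) • v) + ‖x + (1/2 : ℝ) • v‖⁻¹ • (x + (1/2 : ℝ) • v)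
        = N⁻¹ • ((2 : ℝ) • x) := by
      rw [hNeq]; module
    have hdiff : ‖x + (1/2 : ℝ) • v‖⁻¹ • (x + (1/2 : ℝ) • v) - N⁻¹ • (x - (1/2 : ℝ) • v)
        = N⁻¹ • v := by
      rw [hNeq]; module
    have hnorm : ‖N⁻¹ • ((2 : ℝ) • x)‖ = N⁻¹ * 2 := by
      rw [norm_smul, norm_smul, hx]
      simp [abs_of_pos hN]
    have hN2 : (N⁻¹ * 2) ≠ 0 := by positivity
    constructor
    · rw [hsum, hnorm]
      match_scalars
      field_simp
    · rw [hsum, hdiff, hnorm]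
      match_scalars
      field_simp
  · -- right inverse
    intro x₀ x₁ h₀ h₁ hne
    simp only [R1, R2]
    set s : ℝ := ‖x₀ + x₁‖ with hsdef
    have hs : 0 < s := by rwa [hsdef, norm_pos_iff]
    have e1 : s⁻¹ • (x₀ + x₁) - (1/2 : ℝ) • (s⁻¹ • ((2 : ℝ) • (x₁ - x₀)))
        = s⁻¹ • ((2 : ℝ) • x₀) := by module
    have e2 : s⁻¹ • (x₀ + x₁) + (1/2 : ℝ) • (s⁻¹ • ((2 : ℝ) • (x₁ - x₀)))
        = s⁻¹ • ((2 : ℝ) • x₁) := by module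
    have n1 : ‖s⁻¹ • ((2 : ℝ) • x₀)‖ = s⁻¹ * 2 := by
      rw [norm_smul, norm_smul, h₀]
      simp [abs_of_pos hs]
    have n2 : ‖s⁻¹ • ((2 : ℝ) • x₁)‖ = s⁻¹ * 2 := by
      rw [norm_smul, norm_smul, h₁]
      simp [abs_of_pos hs]
    constructor
    · rw [e1, n1]
      match_scalars
      field_simp
    · rw [e2, n2]
      match_scalars
      field_simp
end
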